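/- Let A and B be finite types and let φ₀, φ₁ : A × B → ℂ be unit vectors. Then there exists a unitary matrix S ∈ Matrix.unitaryGroup A ℂ such that |⟨(S ⊗ I).mulVec φ₀, φ₁⟩| = F(ptrA φ₀, ptrA φ₁). (Uhlmann's theorem in local-unitary form: the fidelity of the reduced states is attained as the overlap achievable by acting with a unitary on the A system alone.) -/

import Mathlib

/-!
Write a vector `φ` on `A × B` as the matrix `P b a = φ (a, b)`, so that `ptrA φ = P Pᴴ`, and the
overlap of `(Wᵀ ⊗ I) φ₀` with `φ₁` is `tr (Wᴴ T)` for `T = P₀ᴴ P₁`. Choosing `W` from the polar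
decomposition `T = W |T|` makes the overlap `tr |T|`. With `R = √(P₀ P₀ᴴ)` and `Y = R P₁` we have
`Tᴴ T = Yᴴ Y` and `Y Yᴴ = R (P₁ P₁ᴴ) R`, and `tr √(Yᴴ Y) = tr √(Y Yᴴ)` (polar decomposition again,
after padding `Y` to a square matrix), so `tr |T|` is the fidelity of the reduced states.
-/

open scoped ComplexOrder
open Matrix

noncomputable section

/-- Partial trace over `A` of the outer product `|ψ⟩⟨ψ|`:
`(ptrA ψ) j q = ∑ i, ψ (i, j) * conj (ψ (i, q))`. -/
def ptrA {A B : Type*} [Fintype A] (ψ : A × B → ℂ) : Matrix B B ℂ :=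
  fun j q => ∑ i : A, ψ (i, j) * (starRingEnd ℂ) (ψ (i, q))

/-- The Kronecker product `S ⊗ I` with the identity on `B`, as a matrix on `A × B`. -/
def kronId {A B : Type*} [DecidableEq B] (S : Matrix A A ℂ) : Matrix (A × B) (A × B) ℂ :=
  Matrix.kroneckerMap (· * ·) S (1 : Matrix B B ℂ)

/-- `ptrA ψ` is a Gram matrix, hence positive semidefinite. -/
lemma ptrA_posSemidef {A B : Type*} [Fintype A] [Fintype B] (ψ : A × B → ℂ) :
    (ptrA ψ).PosSemidef := by
  set V : Matrix A B ℂ := Matrix.of fun i j => (starRingEnd ℂ) (ψ (i, j)) with hV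
  have h := Matrix.posSemidef_conjTranspose_mul_self V
  have heq : ptrA ψ = Vᴴ * V := by
    ext j q
    simp [Matrix.mul_apply, Matrix.conjTranspose_apply, ptrA, hV, mul_comm]
  rw [heq]; exact h

/-- The positive semidefinite square root, as `Matrix.PosSemidef.sqrt` was defined in the
older Mathlib (removed since). -/
noncomputable def Matrix.PosSemidef.sqrt {n 𝕜 : Type*} [Fintype n] [DecidableEq n] [RCLike 𝕜]
    {A : Matrix n n 𝕜} (hA : A.PosSemidef) : Matrix n n 𝕜 :=
  hA.1.eigenvectorUnitary.1 * diagonal ((↑) ∘ (√·) ∘ hA.1.eigenvalues) *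
    (star hA.1.eigenvectorUnitary : Matrix n n 𝕜)

lemma Matrix.PosSemidef.posSemidef_sqrt {n 𝕜 : Type*} [Fintype n] [DecidableEq n] [RCLike 𝕜]
    {A : Matrix n n 𝕜} (hA : A.PosSemidef) : hA.sqrt.PosSemidef := by
  apply PosSemidef.mul_mul_conjTranspose_same
  refine posSemidef_diagonal_iff.mpr fun i ↦ ?_
  rw [Function.comp_apply, RCLike.nonneg_iff]
  constructor
  · simp only [RCLike.ofReal_re]; exact Real.sqrt_nonneg _
  · simp only [RCLike.ofReal_im]

lemma sqrt_mul_mul_sqrt_posSemidef {B : Type*} [Fintype B] [DecidableEq B]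
    {ρ σ : Matrix B B ℂ} (hρ : ρ.PosSemidef) (hσ : σ.PosSemidef) :
    (hρ.sqrt * σ * hρ.sqrt).PosSemidef := by
  have h := hσ.mul_mul_conjTranspose_same hρ.sqrt
  rwa [hρ.posSemidef_sqrt.isHermitian.eq] at h

/-- The fidelity `F(ρ, σ) = tr √(√ρ * σ * √ρ)` of two positive semidefinite matrices. -/
def fidelity {B : Type*} [Fintype B] [DecidableEq B] {ρ σ : Matrix B B ℂ}
    (hρ : ρ.PosSemidef) (hσ : σ.PosSemidef) : ℝ :=
  ((sqrt_mul_mul_sqrt_posSemidef hρ hσ).sqrt.trace).re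

open scoped MatrixOrder

namespace Matrix

variable {𝕜 n : Type*} [RCLike 𝕜] [Fintype n] [DecidableEq n]

theorem exists_unitary_eq_mul_diagonal_sqrt (M : Matrix n n 𝕜) (d : n → ℝ)
    (hM : Mᴴ * M = diagonal fun i ↦ (d i : 𝕜)) :
    ∃ V ∈ unitaryGroup n 𝕜, M = V * diagonal fun i ↦ (√(d i) : 𝕜) := by
  let c : n → EuclideanSpace 𝕜 n := fun j ↦ WithLp.toLp 2 fun a ↦ M a j
  have hc : ∀ i j, inner 𝕜 (c i) (c j) = if i = j then (d i : 𝕜) else 0 := fun i j ↦ by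
    simpa [c, EuclideanSpace.inner_eq_star_dotProduct, mul_apply, dotProduct, mul_comm,
      diagonal_apply] using congrFun (congrFun hM i) j
  have hd : ∀ i, d i = ‖c i‖ ^ 2 := fun i ↦ by
    have h := (if_pos rfl ▸ hc i i).symm.trans (inner_self_eq_norm_sq_to_K (c i))
    exact RCLike.ofReal_injective (K := 𝕜) (by simpa using h)
  have hc0 : ∀ j, d j = 0 → c j = 0 := fun j hj ↦ by
    rwa [hd, sq_eq_zero_iff, norm_eq_zero] at hj
  have hpos : ∀ i, d i ≠ 0 → 0 < d i := fun i hi ↦ lt_of_le_of_ne (hd i ▸ sq_nonneg _) hi.symm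
  -- The normalised nonzero columns of `M` are orthonormal; any orthonormal basis extending them
  -- gives the columns of `V`.
  let v : n → EuclideanSpace 𝕜 n := fun i ↦ (√(d i) : 𝕜)⁻¹ • c i
  have hv : Orthonormal 𝕜 ({i | d i ≠ 0}.domRestrict v) := by
    rw [orthonormal_iff_ite]
    rintro ⟨i, hi⟩ ⟨j, -⟩
    simp only [Set.domRestrict_apply, Subtype.mk.injEq, v, inner_smul_left, inner_smul_right, hc]
    split_ifs with hij
    · subst hij
      have hsq : (√(d i) : 𝕜) ^ 2 = d i := by norm_cast; exact Real.sq_sqrt (hpos i hi).le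
      have hne : (√(d i) : 𝕜) ≠ 0 := by exact_mod_cast (Real.sqrt_pos.mpr (hpos i hi)).ne'
      rw [map_inv₀, RCLike.conj_ofReal, ← hsq]
      field_simp
    · simp
  obtain ⟨b, hb⟩ := hv.exists_orthonormalBasis_extension_of_card_eq finrank_euclideanSpace
  refine ⟨(EuclideanSpace.basisFun n 𝕜).toBasis.toMatrix b,
    (EuclideanSpace.basisFun n 𝕜).toMatrix_orthonormalBasis_mem_unitary b, ?_⟩
  ext a j
  rw [mul_diagonal]
  by_cases hj : d j = 0
  · simpa [hj] using congrArg (· a) (hc0 j hj)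
  · change M a j = b j a * _
    rw [hb j hj]
    have hne : (√(d j) : 𝕜) ≠ 0 := by exact_mod_cast (Real.sqrt_pos.mpr (hpos j hj)).ne'
    simp only [v, c, PiLp.smul_apply, smul_eq_mul]
    field_simp

theorem PosSemidef.sqrt_eq_cfcSqrt {A : Matrix n n 𝕜} (hA : A.PosSemidef) :
    hA.sqrt = CFC.sqrt A := by
  rw [CFC.sqrt_eq_cfc, cfc_nnreal_eq_real _ A, hA.1.cfc_eq, IsHermitian.cfc,
    Unitary.conjStarAlgAut_apply, PosSemidef.sqrt]
  congr 3
  funext i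
  simp [Real.coe_toNNReal', max_eq_left (hA.eigenvalues_nonneg i)]

theorem cfcSqrt_mul_mul_conjTranspose {m : Type*} [Fintype m] [DecidableEq m]
    {P : Matrix m n 𝕜} (hP : Pᴴ * P = 1) {M : Matrix n n 𝕜} (hM : M.PosSemidef) :
    CFC.sqrt (P * M * Pᴴ) = P * CFC.sqrt M * Pᴴ := by
  have hS : (CFC.sqrt M).PosSemidef := (CFC.sqrt_nonneg M).posSemidef
  refine CFC.sqrt_unique ?_ (hS.mul_mul_conjTranspose_same P).nonneg
  calc P * CFC.sqrt M * Pᴴ * (P * CFC.sqrt M * Pᴴ)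
      = P * CFC.sqrt M * (Pᴴ * P) * CFC.sqrt M * Pᴴ := by simp only [Matrix.mul_assoc]
    _ = P * M * Pᴴ := by
      rw [hP, Matrix.mul_one, Matrix.mul_assoc P, CFC.sqrt_mul_sqrt_self M hM.nonneg]

theorem trace_cfcSqrt_mul_mul_conjTranspose {m : Type*} [Fintype m] [DecidableEq m]
    {P : Matrix m n 𝕜} (hP : Pᴴ * P = 1) {M : Matrix n n 𝕜} (hM : M.PosSemidef) :
    (CFC.sqrt (P * M * Pᴴ)).trace = (CFC.sqrt M).trace := by
  rw [cfcSqrt_mul_mul_conjTranspose hP hM, trace_mul_cycle, hP, Matrix.one_mul]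

theorem exists_unitary_eq_mul_cfcSqrt (T : Matrix n n 𝕜) :
    ∃ W ∈ unitaryGroup n 𝕜, T = W * CFC.sqrt (Tᴴ * T) := by
  have hG := posSemidef_conjTranspose_mul_self T
  let U : Matrix n n 𝕜 := hG.1.eigenvectorUnitary
  have hU : U ∈ unitaryGroup n 𝕜 := hG.1.eigenvectorUnitary.2
  have hUU : U * star U = 1 := Unitary.mul_star_self_of_mem hU
  obtain ⟨V, hV, hTU⟩ := exists_unitary_eq_mul_diagonal_sqrt (T * U) hG.1.eigenvalues (by
    have := hG.1.conjStarAlgAut_star_eigenvectorUnitary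
    rw [Unitary.conjStarAlgAut_star_apply] at this
    rw [conjTranspose_mul, ← star_eq_conjTranspose]
    simpa only [Matrix.mul_assoc, Function.comp_def] using this)
  refine ⟨V * star U, Submonoid.mul_mem _ hV (Unitary.star_mem hU), ?_⟩
  rw [← hG.sqrt_eq_cfcSqrt, PosSemidef.sqrt]
  calc T = T * U * star U := by rw [Matrix.mul_assoc, hUU, Matrix.mul_one]
    _ = V * star U * (U * diagonal ((↑) ∘ (√·) ∘ hG.1.eigenvalues) * star U) := by
      rw [hTU]
      simp only [Matrix.mul_assoc]
      rw [← Matrix.mul_assoc (star U) U, Unitary.star_mul_self_of_mem hU, Matrix.one_mul]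
      rfl

theorem trace_cfcSqrt_mul_conjTranspose_self_square (Z : Matrix n n 𝕜) :
    (CFC.sqrt (Z * Zᴴ)).trace = (CFC.sqrt (Zᴴ * Z)).trace := by
  obtain ⟨W, hW, hZ⟩ := exists_unitary_eq_mul_cfcSqrt Z
  have hS := (CFC.sqrt_nonneg (Zᴴ * Z)).posSemidef
  have hZZ : Z * Zᴴ = W * (Zᴴ * Z) * Wᴴ := by
    conv_lhs => rw [hZ]
    rw [conjTranspose_mul, hS.isHermitian.eq, Matrix.mul_assoc, ← Matrix.mul_assoc (CFC.sqrt _),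
      CFC.sqrt_mul_sqrt_self _ (posSemidef_conjTranspose_mul_self Z).nonneg, ← Matrix.mul_assoc]
  rw [hZZ, trace_cfcSqrt_mul_mul_conjTranspose (Unitary.star_mul_self_of_mem hW)
    (posSemidef_conjTranspose_mul_self Z)]

theorem trace_cfcSqrt_mul_conjTranspose_self {m : Type*} [Fintype m] [DecidableEq m]
    (Y : Matrix m n 𝕜) : (CFC.sqrt (Y * Yᴴ)).trace = (CFC.sqrt (Yᴴ * Y)).trace := by
  let ι : Matrix (m ⊕ n) m 𝕜 := fromRows 1 0
  let κ : Matrix (m ⊕ n) n 𝕜 := fromRows 0 1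
  have hι : ιᴴ * ι = 1 := by
    simp [ι, conjTranspose_fromRows_eq_fromCols_conjTranspose, fromCols_mul_fromRows]
  have hκ : κᴴ * κ = 1 := by
    simp [κ, conjTranspose_fromRows_eq_fromCols_conjTranspose, fromCols_mul_fromRows]
  let Z := ι * Y * κᴴ
  have hZZ : Z * Zᴴ = ι * (Y * Yᴴ) * ιᴴ := by
    simp only [Z, conjTranspose_mul, conjTranspose_conjTranspose, Matrix.mul_assoc]
    rw [← Matrix.mul_assoc κᴴ κ, hκ, Matrix.one_mul]
  have hZZ' : Zᴴ * Z = κ * (Yᴴ * Y) * κᴴ := by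
    simp only [Z, conjTranspose_mul, conjTranspose_conjTranspose, Matrix.mul_assoc]
    rw [← Matrix.mul_assoc ιᴴ ι, hι, Matrix.one_mul]
  rw [← trace_cfcSqrt_mul_mul_conjTranspose hι (posSemidef_self_mul_conjTranspose Y), ← hZZ,
    trace_cfcSqrt_mul_conjTranspose_self_square, hZZ',
    trace_cfcSqrt_mul_mul_conjTranspose hκ (posSemidef_conjTranspose_mul_self Y)]

omit [DecidableEq n] in
theorem trace_cfcSqrt_sqrt_mul_mul_sqrt_eq {m p : Type*} [Fintype m] [DecidableEq m] [Fintype p]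
    [DecidableEq p] (P₀ : Matrix m n 𝕜) (P₁ : Matrix m p 𝕜) :
    (CFC.sqrt (CFC.sqrt (P₀ * P₀ᴴ) * (P₁ * P₁ᴴ) * CFC.sqrt (P₀ * P₀ᴴ))).trace =
      (CFC.sqrt ((P₀ᴴ * P₁)ᴴ * (P₀ᴴ * P₁))).trace := by
  let R := CFC.sqrt (P₀ * P₀ᴴ)
  have hR : Rᴴ = R := (CFC.sqrt_nonneg _).posSemidef.isHermitian.eq
  have hRR : R * R = P₀ * P₀ᴴ :=
    CFC.sqrt_mul_sqrt_self _ (posSemidef_self_mul_conjTranspose P₀).nonneg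
  have h₁ : R * (P₁ * P₁ᴴ) * R = (R * P₁) * (R * P₁)ᴴ := by
    rw [conjTranspose_mul, hR]; simp only [Matrix.mul_assoc]
  have h₂ : (P₀ᴴ * P₁)ᴴ * (P₀ᴴ * P₁) = (R * P₁)ᴴ * (R * P₁) := by
    rw [conjTranspose_mul, conjTranspose_mul, conjTranspose_conjTranspose, hR]
    simp only [Matrix.mul_assoc]
    rw [← Matrix.mul_assoc R R, hRR, Matrix.mul_assoc]
  rw [h₁, h₂, trace_cfcSqrt_mul_conjTranspose_self]

end Matrix

def coeffMatrix {A B : Type*} (ψ : A × B → ℂ) : Matrix B A ℂ :=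
  Matrix.of fun b a ↦ ψ (a, b)

theorem ptrA_eq_coeffMatrix_mul_conjTranspose {A B : Type*} [Fintype A] (ψ : A × B → ℂ) :
    ptrA ψ = coeffMatrix ψ * (coeffMatrix ψ)ᴴ := by
  ext j q
  simp [ptrA, coeffMatrix, mul_apply]

theorem sum_conj_kronId_transpose_mulVec_mul {A B : Type*} [Fintype A] [Fintype B] [DecidableEq B]
    (W : Matrix A A ℂ) (φ₀ φ₁ : A × B → ℂ) :
    ∑ k : A × B, (starRingEnd ℂ) ((kronId Wᵀ).mulVec φ₀ k) * φ₁ k =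
      (Wᴴ * ((coeffMatrix φ₀)ᴴ * coeffMatrix φ₁)).trace := by
  simp only [trace, diag, mul_apply, mulVec, dotProduct, kronId, kroneckerMap_apply,
    Fintype.sum_prod_type, one_apply, coeffMatrix, conjTranspose_apply, of_apply, transpose_apply,
    mul_ite, mul_one, mul_zero, ite_mul, zero_mul, Finset.sum_ite_eq, Finset.mem_univ, if_true,
    map_sum, map_mul, Finset.sum_mul, Finset.mul_sum, RCLike.star_def]
  refine Finset.sum_congr rfl fun a _ ↦ ?_
  rw [Finset.sum_comm]
  simp only [mul_assoc]

theorem fidelity_eq_re_trace_cfcSqrt {B : Type*} [Fintype B] [DecidableEq B]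
    {ρ σ : Matrix B B ℂ} (hρ : ρ.PosSemidef) (hσ : σ.PosSemidef) :
    fidelity hρ hσ = (CFC.sqrt (CFC.sqrt ρ * σ * CFC.sqrt ρ)).trace.re := by
  rw [fidelity, PosSemidef.sqrt_eq_cfcSqrt, hρ.sqrt_eq_cfcSqrt]

theorem uhlmann_local_unitary_general
    {A B : Type*} [Fintype A] [Fintype B] [DecidableEq A] [DecidableEq B]
    (φ₀ φ₁ : A × B → ℂ) :
    ∃ S ∈ Matrix.unitaryGroup A ℂ,
      ‖∑ k : A × B, (starRingEnd ℂ) ((kronId S).mulVec φ₀ k) * φ₁ k‖ =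
        fidelity (ptrA_posSemidef φ₀) (ptrA_posSemidef φ₁) := by
  set T := (coeffMatrix φ₀)ᴴ * coeffMatrix φ₁
  obtain ⟨W, hW, hT⟩ := exists_unitary_eq_mul_cfcSqrt T
  have hWT : Wᴴ * T = CFC.sqrt (Tᴴ * T) := by
    nth_rewrite 1 [hT]
    rw [← Matrix.mul_assoc, ← star_eq_conjTranspose, Unitary.star_mul_self_of_mem hW,
      Matrix.one_mul]
  refine ⟨Wᵀ, transpose_mem_unitaryGroup_iff.mpr hW, ?_⟩
  rw [sum_conj_kronId_transpose_mulVec_mul, hWT, fidelity_eq_re_trace_cfcSqrt,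
    ptrA_eq_coeffMatrix_mul_conjTranspose, ptrA_eq_coeffMatrix_mul_conjTranspose,
    trace_cfcSqrt_sqrt_mul_mul_sqrt_eq]
  exact (Complex.re_eq_norm.mpr (CFC.sqrt_nonneg _).posSemidef.trace_nonneg).symm

/-- **Uhlmann's theorem (local-unitary form).** The fidelity of the reduced states is
attained as the overlap achievable by acting with a unitary on the `A` system alone. -/
theorem uhlmann_local_unitary
    {A B : Type*} [Fintype A] [Fintype B] [DecidableEq A] [DecidableEq B]
    (φ₀ φ₁ : A × B → ℂ)
    (h₀ : ∑ k : A × B, (starRingEnd ℂ) (φ₀ k) * φ₀ k = 1)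
    (h₁ : ∑ k : A × B, (starRingEnd ℂ) (φ₁ k) * φ₁ k = 1) :
    ∃ S ∈ Matrix.unitaryGroup A ℂ,
      ‖∑ k : A × B, (starRingEnd ℂ) ((kronId S).mulVec φ₀ k) * φ₁ k‖ =
        fidelity (ptrA_posSemidef φ₀) (ptrA_posSemidef φ₁) :=
  uhlmann_local_unitary_general φ₀ φ₁
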